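/- Let c > 3/2 and μ ∈ (0,1), and suppose that for all (v,u) in the compact component Σ_{μ,c} of K_{μ,c}⁻¹(0) one has |u|² < ε and |v|² < ε, where ε < min{(2c-3)/(3C+8), 1/(2C), 1/4} and C > 3 is the universal constant bounding the error terms of the Hessian. Then there exists δ = δ(μ,c) > 0 such that D²K_{μ,c}(v,u)[(û,v̂),(û,v̂)] ≥ δ(|û|² + |v̂|²) for all (v,u) ∈ Σ_{μ,c} and all (û,v̂) ∈ ℂ². In particular K_{μ,c} is strongly convex on a neighborhood of Σ_{μ,c}. -/

import Mathlib

open Complex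

/-- `⟨a, i b⟩ = a₂b₁ - a₁b₂`. -/
def iprod (a b : ℂ) : ℝ := a.im * b.re - a.re * b.im

/-- The regularized Hamiltonian `K_{μ,c}` in Levi-Civita coordinates `(v,u)`. -/
noncomputable def Kreg (μ c : ℝ) : ℂ × ℂ → ℝ :=
  fun p => (1 / 2) * ‖p.2‖ ^ 2 + c * ‖p.1‖ ^ 2 + 2 * ‖p.1‖ ^ 2 * iprod p.2 p.1
    - μ * (p.2 * p.1).im - μ * ‖p.1‖ ^ 2 / ‖2 * p.1 ^ 2 - 1‖ - (1 - μ) / 2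

/-!
The Hessian bound `hCbound` reduces the claim to a real quadratic form in `x = ‖û‖`, `y = ‖v̂‖`.
Its only non-diagonal term `2μ|Im(û v̂)| ≤ 2μxy` is absorbed by the weighted AM-GM inequality
`2xy ≤ (1 - k)x² + (1 + 2k)y²` (valid for `0 ≤ k ≤ 1/2`, here `k = Cε`), and the singular term
is controlled by `1/|2v² - 1| ≤ 1/(1 - 2ε) ≤ 1 + 4ε` for `ε ≤ 1/4`. What is left is diagonal
with coefficients `(1 - Cε)(1 - μ)` and `2c - 3 - (3C + 8)ε`, both positive by the choice of `ε`.
-/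

lemma one_sub_two_mul_norm_sq_le_norm_two_mul_sq_sub_one (v : ℂ) :
    1 - 2 * ‖v‖ ^ 2 ≤ ‖2 * v ^ 2 - 1‖ := by
  have h := norm_sub_norm_le (1 : ℂ) (2 * v ^ 2)
  rw [norm_sub_rev, norm_one, norm_mul, norm_pow, RCLike.norm_ofNat] at h
  exact h

lemma div_norm_two_mul_sq_sub_one_le {v : ℂ} {ε x : ℝ} (hv : ‖v‖ ^ 2 < ε) (hε : ε ≤ 1 / 4)
    (hx : 0 ≤ x) : x / ‖2 * v ^ 2 - 1‖ ≤ (1 + 4 * ε) * x := by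
  have hlow : 1 - 2 * ε ≤ ‖2 * v ^ 2 - 1‖ := by
    linarith [one_sub_two_mul_norm_sq_le_norm_two_mul_sq_sub_one v]
  have hε0 : 0 < ε := (sq_nonneg _).trans_lt hv
  rw [div_le_iff₀ (by linarith)]
  nlinarith [mul_nonneg (mul_nonneg hx hε0.le) (by linarith : (0 : ℝ) ≤ 1 - 4 * ε)]

lemma abs_im_mul_le_norm_mul_norm (u v : ℂ) : |(u * v).im| ≤ ‖u‖ * ‖v‖ :=
  (abs_im_le_norm _).trans_eq (norm_mul u v)

lemma two_mul_mul_le_of_le_half {k : ℝ} (hk0 : 0 ≤ k) (hk : k ≤ 1 / 2) (x y : ℝ) :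
    2 * (x * y) ≤ (1 - k) * x ^ 2 + (1 + 2 * k) * y ^ 2 := by
  nlinarith [sq_nonneg ((1 - k) * x - y),
    mul_nonneg (mul_nonneg hk0 (by linarith : (0 : ℝ) ≤ 1 - 2 * k)) (sq_nonneg y)]

lemma min_mul_add_sq_le_quadratic_form {c μ k ε : ℝ} (hμ0 : 0 ≤ μ) (hμ1 : μ ≤ 1)
    (hk0 : 0 ≤ k) (hk : k ≤ 1 / 2) (hε : 0 ≤ ε) (x y : ℝ) :
    min ((1 - k) * (1 - μ)) (2 * c - 3 - 3 * k - 8 * ε) * (x ^ 2 + y ^ 2)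
      ≤ x ^ 2 + 2 * c * y ^ 2 - k * (x ^ 2 + y ^ 2) - 2 * μ * (x * y)
        - 2 * μ * (1 + 4 * ε) * y ^ 2 := by
  have hamgm := mul_le_mul_of_nonneg_left (two_mul_mul_le_of_le_half hk0 hk x y) hμ0
  have hx := mul_le_mul_of_nonneg_right (min_le_left ((1 - k) * (1 - μ))
    (2 * c - 3 - 3 * k - 8 * ε)) (sq_nonneg x)
  have hy := mul_le_mul_of_nonneg_right (min_le_right ((1 - k) * (1 - μ))
    (2 * c - 3 - 3 * k - 8 * ε)) (sq_nonneg y)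
  have hμy : 0 ≤ (1 - μ) * (3 + 2 * k + 8 * ε) * y ^ 2 :=
    mul_nonneg (mul_nonneg (by linarith) (by linarith)) (sq_nonneg y)
  nlinarith

lemma min_mul_le_hessian_lower_bound {c μ k ε : ℝ} {v uh vh : ℂ} (hμ0 : 0 ≤ μ) (hμ1 : μ ≤ 1)
    (hk0 : 0 ≤ k) (hk : k ≤ 1 / 2) (hv : ‖v‖ ^ 2 < ε) (hε : ε ≤ 1 / 4) :
    min ((1 - k) * (1 - μ)) (2 * c - 3 - 3 * k - 8 * ε) * (‖uh‖ ^ 2 + ‖vh‖ ^ 2)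
      ≤ ‖uh‖ ^ 2 + 2 * c * ‖vh‖ ^ 2 - k * (‖uh‖ ^ 2 + ‖vh‖ ^ 2)
        - 2 * μ * |(uh * vh).im| - 2 * μ * ‖vh‖ ^ 2 / ‖2 * v ^ 2 - 1‖ := by
  have him := mul_le_mul_of_nonneg_left (abs_im_mul_le_norm_mul_norm uh vh)
    (by linarith : (0 : ℝ) ≤ 2 * μ)
  have hdiv := div_norm_two_mul_sq_sub_one_le hv hε
    (by positivity : (0 : ℝ) ≤ 2 * μ * ‖vh‖ ^ 2)
  have hquad := min_mul_add_sq_le_quadratic_form (c := c) hμ0 hμ1 hk0 hk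
    ((sq_nonneg _).trans hv.le) ‖uh‖ ‖vh‖
  linarith

theorem strong_convexity_on_energy_surface_general
    (c μ C ε : ℝ) (hμ : μ ∈ Set.Ioo (0 : ℝ) 1) (hC : 3 < C)
    (hε : 0 < ε)
    (hεmin : ε < min ((2 * c - 3) / (3 * C + 8)) (min (1 / (2 * C)) (1 / 4)))
    (S : Set (ℂ × ℂ))
    (hSsmall : ∀ p ∈ S, ‖p.2‖ ^ 2 < ε ∧ ‖p.1‖ ^ 2 < ε)
    -- `C` is the universal constant bounding the error terms of the Hessian:
    (hCbound : ∀ v u : ℂ, ‖u‖ ^ 2 < ε → ‖v‖ ^ 2 < ε → ∀ uh vh : ℂ,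
      fderiv ℝ (fderiv ℝ (Kreg μ c)) (v, u) (vh, uh) (vh, uh)
        ≥ ‖uh‖ ^ 2 + 2 * c * ‖vh‖ ^ 2 - C * ε * (‖uh‖ ^ 2 + ‖vh‖ ^ 2)
          - 2 * μ * |(uh * vh).im| - 2 * μ * ‖vh‖ ^ 2 / ‖2 * v ^ 2 - 1‖) :
    ∃ δ > (0 : ℝ), ∀ p ∈ S, ∀ uh vh : ℂ,
      fderiv ℝ (fderiv ℝ (Kreg μ c)) p (vh, uh) (vh, uh)
        ≥ δ * (‖uh‖ ^ 2 + ‖vh‖ ^ 2) := by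
  obtain ⟨hμ0, hμ1⟩ := hμ
  rw [lt_min_iff, lt_min_iff] at hεmin
  obtain ⟨hεc, hεC, hε4⟩ := hεmin
  have hCε : C * ε < 1 / 2 := by
    have := (lt_div_iff₀ (by linarith : (0 : ℝ) < 2 * C)).mp hεC
    linarith
  have hεc' : (3 * C + 8) * ε < 2 * c - 3 := by
    have := (lt_div_iff₀ (by linarith : (0 : ℝ) < 3 * C + 8)).mp hεc
    linarith
  refine ⟨min ((1 - C * ε) * (1 - μ)) (2 * c - 3 - 3 * (C * ε) - 8 * ε),
    lt_min (mul_pos (by linarith) (by linarith)) (by linarith), ?_⟩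
  intro p hp uh vh
  obtain ⟨hu, hv⟩ := hSsmall p hp
  exact (min_mul_le_hessian_lower_bound hμ0.le hμ1.le (by positivity) hCε.le hv hε4.le).trans
    (hCbound p.1 p.2 hu hv uh vh)

theorem strong_convexity_on_energy_surface
    (c μ C ε : ℝ) (hc : 3 / 2 < c) (hμ : μ ∈ Set.Ioo (0 : ℝ) 1) (hC : 3 < C)
    (hε : 0 < ε)
    (hεmin : ε < min ((2 * c - 3) / (3 * C + 8)) (min (1 / (2 * C)) (1 / 4)))
    (S : Set (ℂ × ℂ)) (hScomp : IsCompact S)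
    (hSsub : S ⊆ {p | Kreg μ c p = 0})
    (hSsmall : ∀ p ∈ S, ‖p.2‖ ^ 2 < ε ∧ ‖p.1‖ ^ 2 < ε)
    -- `C` is the universal constant bounding the error terms of the Hessian:
    (hCbound : ∀ v u : ℂ, ‖u‖ ^ 2 < ε → ‖v‖ ^ 2 < ε → ∀ uh vh : ℂ,
      fderiv ℝ (fderiv ℝ (Kreg μ c)) (v, u) (vh, uh) (vh, uh)
        ≥ ‖uh‖ ^ 2 + 2 * c * ‖vh‖ ^ 2 - C * ε * (‖uh‖ ^ 2 + ‖vh‖ ^ 2)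
          - 2 * μ * |(uh * vh).im| - 2 * μ * ‖vh‖ ^ 2 / ‖2 * v ^ 2 - 1‖) :
    ∃ δ > (0 : ℝ), ∀ p ∈ S, ∀ uh vh : ℂ,
      fderiv ℝ (fderiv ℝ (Kreg μ c)) p (vh, uh) (vh, uh)
        ≥ δ * (‖uh‖ ^ 2 + ‖vh‖ ^ 2) :=
  strong_convexity_on_energy_surface_general c μ C ε hμ hC hε hεmin S hSsmall hCbound
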